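/- arXiv:2506.11956 — 2 statements merged into one kernel-verified Lean document; each statement's English description precedes it below -/
import Mathlib

section
/- Decomposition of the truncated seminorm: let v_h ∈ Û_h and let w_h ∈ Û_h^∂ be defined by w_f = v_f if f ∈ F_h(Γ) and w_f = 0 otherwise. Then |w_h|_{1/2,h}² ≤ |γ(v_h)|_{1/2,h}² + 2 E_0, where E_0 = Σ_{f∈F_h(Γ)} Σ_{f'∈F_h^∂ \ F_h(Γ)} |f|_{d−1} |f'|_{d−1} |v̄_f|² / |x_f − x_{f'}|^d and v̄_f is the mean value of v_f over f. -/
open MeasureTheory Metric Set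
open scoped ENNReal NNReal Classical

noncomputable section

abbrev Euc (d : ℕ) := EuclideanSpace ℝ (Fin d)

/-- A function `Euc d → ℝ` is (the evaluation of) a polynomial of total degree ≤ k. -/
def IsPolyDeg (d k : ℕ) (v : Euc d → ℝ) : Prop :=
  ∃ p : MvPolynomial (Fin d) ℝ, p.totalDegree ≤ k ∧
    ∀ x : Euc d, v x = MvPolynomial.eval (fun i => x i) p

/-- A bounded polytopal domain. -/
def IsPolytopalDomain {d : ℕ} (Ω : Set (Euc d)) : Prop :=
  IsOpen Ω ∧ Bornology.IsBounded Ω ∧ Ω.Nonempty ∧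
    ∃ P : Finset (Finset (Euc d)),
      closure Ω = ⋃ p ∈ P, convexHull ℝ (p : Set (Euc d))

/-- Cone with apex at the origin, axis `u`, half-opening angle `θ` and height `d₀`. -/
def ConeSet {d : ℕ} (u : Euc d) (θ d₀ : ℝ) : Set (Euc d) :=
  {y | ‖y‖ ≤ d₀ ∧ Real.cos θ * ‖y‖ ≤ (inner ℝ u y : ℝ)}

/-- Uniform cone condition for `Ω`, with cone parameters `θ`, `d₀` and at most `N`
covering patches of the boundary. -/
def UniformCone {d : ℕ} (Ω : Set (Euc d)) (θ d₀ : ℝ) (N : ℕ) : Prop :=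
  ∃ n : ℕ, n ≤ N ∧ ∃ (B : Fin n → Set (Euc d)) (u : Fin n → Euc d),
    (∀ i, ‖u i‖ = 1) ∧ frontier Ω ⊆ (⋃ i, B i) ∧
      ∀ i, ∀ x ∈ B i ∩ frontier Ω, ∀ y ∈ ConeSet (u i) θ d₀, x + y ∈ Ω

/-- Geodesic (intrinsic) distance between `x` and `y` along the set `S`. -/
def geoDist {d : ℕ} (S : Set (Euc d)) (x y : Euc d) : ℝ≥0∞ :=
  ⨅ γ : {γ : Path x y // ∀ t, γ t ∈ S}, eVariationOn (γ.1.extend) (Set.Icc 0 1)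

/-- Distance from `x` to the set `A`, measured along the set `S`. -/
def distAlong {d : ℕ} (S : Set (Euc d)) (x : Euc d) (A : Set (Euc d)) : ℝ :=
  (⨅ y ∈ A, geoDist S x y).toReal

/-- A polytopal mesh of the domain `Ω`: cells, faces, centroids, and the
cell-face incidence structure. -/
structure PolyMesh (d : ℕ) (Ω : Set (Euc d)) where
  ιT : Type
  ιF : Type
  finT : Fintype ιT
  finF : Fintype ιF
  neT : Nonempty ιT
  cell : ιT → Set (Euc d)
  face : ιF → Set (Euc d)
  xT : ιT → Euc d
  xF : ιF → Euc d
  facesOf : ιT → Finset ιF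
  cell_open : ∀ t, IsOpen (cell t)
  cell_nonempty : ∀ t, (cell t).Nonempty
  cell_disjoint : ∀ t t', t ≠ t' → Disjoint (cell t) (cell t')
  cell_poly : ∀ t, ∃ P : Finset (Finset (Euc d)),
      closure (cell t) = ⋃ p ∈ P, convexHull ℝ (p : Set (Euc d))
  cells_cover : (⋃ t, closure (cell t)) = closure Ω
  face_nonempty : ∀ f, (face f).Nonempty
  face_subset_frontier : ∀ t, ∀ f ∈ facesOf t, face f ⊆ frontier (cell t)
  frontier_eq : ∀ t, frontier (cell t) = ⋃ f ∈ facesOf t, closure (face f)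
  face_has_cell : ∀ f, ∃ t, f ∈ facesOf t
  face_bdry_or_int : ∀ f, face f ⊆ frontier Ω ∨ face f ⊆ Ω
  xT_mem : ∀ t, xT t ∈ cell t
  xF_mem : ∀ f, xF f ∈ face f

attribute [instance] PolyMesh.finT PolyMesh.finF PolyMesh.neT

namespace PolyMesh

variable {d : ℕ} {Ω : Set (Euc d)} (M : PolyMesh d Ω)

/-- Boundary faces. -/
def bdryFaces : Finset M.ιF := Finset.univ.filter fun f => M.face f ⊆ frontier Ω

/-- Interior faces. -/
def intFaces : Finset M.ιF := Finset.univ.filter fun f => M.face f ⊆ Ω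

/-- Mesh size `h`: the largest cell diameter. -/
def meshSize : ℝ :=
  (Finset.univ : Finset M.ιT).sup' Finset.univ_nonempty fun t => Metric.diam (M.cell t)

/-- Mesh regularity with parameters `ϖ` (ball condition) and `ρ` (quasi-uniformity). -/
def IsRegular (ϖ ρ : ℝ) : Prop :=
  (∀ t, Metric.ball (M.xT t) (ϖ * Metric.diam (M.cell t)) ⊆ M.cell t) ∧
  (∀ f, Metric.ball (M.xF f) (ϖ * Metric.diam (M.face f)) ∩
      (affineSpan ℝ (M.face f) : Set (Euc d)) ⊆ M.face f) ∧
  (∀ t, M.meshSize ≤ ρ * Metric.diam (M.cell t))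

/-- The `(d-1)`-dimensional (Hausdorff) measure of a face. -/
def faceMeas (f : M.ιF) : ℝ := (μH[(d : ℝ) - 1] (M.face f)).toReal

/-- The mean value of a function over a face. -/
def faceMean (f : M.ιF) (v : Euc d → ℝ) : ℝ :=
  (∫ x in M.face f, v x ∂μH[(d : ℝ) - 1]) / M.faceMeas f

/-- The `d`-dimensional volume of a cell. -/
def cellVol (t : M.ιT) : ℝ := (volume (M.cell t)).toReal

/-- The mean value of a function over a cell. -/
def cellMean (t : M.ιT) (v : Euc d → ℝ) : ℝ :=
  (∫ x in M.cell t, v x) / M.cellVol t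

end PolyMesh

/-- A hybrid function: a polynomial of degree ≤ k on each cell and each face. -/
structure Hybrid {d : ℕ} {Ω : Set (Euc d)} (M : PolyMesh d Ω) (k : ℕ) where
  vT : M.ιT → Euc d → ℝ
  vF : M.ιF → Euc d → ℝ
  polyT : ∀ t, IsPolyDeg d k (vT t)
  polyF : ∀ f, IsPolyDeg d k (vF f)

/-- A boundary function: a polynomial of degree ≤ k on each boundary face. -/
structure BdryFun {d : ℕ} {Ω : Set (Euc d)} (M : PolyMesh d Ω) (k : ℕ) where
  w : {f : M.ιF // f ∈ M.bdryFaces} → Euc d → ℝ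
  poly : ∀ f, IsPolyDeg d k (w f)

namespace PolyMesh

variable {d : ℕ} {Ω : Set (Euc d)} (M : PolyMesh d Ω) {k : ℕ}

/-- The trace operator `γ`. -/
def trace (v : Hybrid M k) : BdryFun M k :=
  ⟨fun f => v.vF f.1, fun f => v.polyF f.1⟩

/-- Squared discrete `H¹(Ω)`-seminorm. -/
def sH1sq (v : Hybrid M k) : ℝ :=
  ∑ t : M.ιT, ((∫ x in M.cell t, ‖fderiv ℝ (v.vT t) x‖ ^ 2) +
    ∑ f ∈ M.facesOf t, (Metric.diam (M.cell t))⁻¹ *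
      ∫ x in M.face f, (v.vF f x - v.vT t x) ^ 2 ∂μH[(d : ℝ) - 1])

/-- Discrete `H¹(Ω)`-seminorm. -/
def sH1 (v : Hybrid M k) : ℝ := Real.sqrt (M.sH1sq v)

/-- Squared discrete `H^{1/2}(∂Ω)`-seminorm. -/
def sHalfsq (w : BdryFun M k) : ℝ :=
  (∑ f ∈ M.bdryFaces.attach, (Metric.diam (M.face f.1))⁻¹ *
      ∫ x in M.face f.1, (w.w f x - M.faceMean f.1 (w.w f)) ^ 2 ∂μH[(d : ℝ) - 1]) +
  ∑ f ∈ M.bdryFaces.attach, ∑ f' ∈ M.bdryFaces.attach,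
    if f.1 ≠ f'.1 then
      M.faceMeas f.1 * M.faceMeas f'.1 *
        (M.faceMean f.1 (w.w f) - M.faceMean f'.1 (w.w f')) ^ 2 /
          dist (M.xF f.1) (M.xF f'.1) ^ d
    else 0

/-- Discrete `H^{1/2}(∂Ω)`-seminorm. -/
def sHalf (w : BdryFun M k) : ℝ := Real.sqrt (M.sHalfsq w)

/-- Zero mean over the boundary portion made of the faces in `G`. -/
def zeroMeanOn (G : Finset M.ιF) (w : M.ιF → Euc d → ℝ) : Prop :=
  ∑ f ∈ G, ∫ x in M.face f, w f x ∂μH[(d : ℝ) - 1] = 0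

/-- Truncation to the boundary portion `G` of (the trace of) a hybrid function. -/
def truncate (G : Finset M.ιF) (v : Hybrid M k) : BdryFun M k where
  w f := if f.1 ∈ G then v.vF f.1 else fun _ => 0
  poly f := by
    by_cases h : f.1 ∈ G
    · simpa [h] using v.polyF f.1
    · simp only [h, if_false]
      exact ⟨0, by simp, fun x => by simp⟩

/-- The boundary portion `Γ` determined by a collection `G` of boundary faces. -/
def GammaSet (G : Finset M.ιF) : Set (Euc d) := ⋃ f ∈ G, closure (M.face f)

/-- The relative boundary `∂Γ` of the boundary portion `Γ` inside `∂Ω`. -/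
def GammaRelBdry (G : Finset M.ιF) : Set (Euc d) :=
  M.GammaSet G ∩ closure (frontier Ω \ M.GammaSet G)

/-- Regularity of the boundary portion `Γ` (Assumption on `Γ`): it is mesh compatible,
its size is comparable to that of `Ω`, and its boundary has finite `(d-2)`-measure. -/
def GammaRegular (G : Finset M.ιF) (CΓ : ℝ) : Prop :=
  G ⊆ M.bdryFaces ∧
  CΓ⁻¹ * Metric.diam Ω ^ (d - 1) ≤ (μH[(d : ℝ) - 1] (M.GammaSet G)).toReal ∧
  (μH[(d : ℝ) - 2] (M.GammaRelBdry G)).toReal ≤ CΓ * Metric.diam Ω ^ (d - 2)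

/-- Distance from the centroid of the face `f` to `∂Γ`, measured along `∂Ω`. -/
def distToGammaBdry (G : Finset M.ιF) (f : M.ιF) : ℝ :=
  distAlong (frontier Ω) (M.xF f) (M.GammaRelBdry G)

/-- Layer `G_r` of faces of `Γ` at distance `≈ r h` from `∂Γ`. -/
def layer (G : Finset M.ιF) (r : ℕ) : Finset M.ιF :=
  G.filter fun f => (r : ℝ) * M.meshSize ≤ M.distToGammaBdry G f ∧
    M.distToGammaBdry G f < ((r : ℝ) + 1) * M.meshSize

/-- The set `I_{ft}` of interior faces crossing the segment `[x_f, x_t]`. -/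
def Ift (f : M.ιF) (t : M.ιT) : Finset M.ιF :=
  M.intFaces.filter fun g => (M.face g ∩ segment ℝ (M.xF f) (M.xT t)).Nonempty

/-- The slice `I_{ft}^m` of `I_{ft}` at distance `≈ m h` from `f`. -/
def Iftm (f : M.ιF) (t : M.ιT) (m : ℕ) : Finset M.ιF :=
  (M.Ift f t).filter fun g => (m : ℝ) * M.meshSize ≤ dist (M.xF f) (M.xF g) ∧
    dist (M.xF f) (M.xF g) < ((m : ℝ) + 1) * M.meshSize

/-- The set `C_f` of cells intersecting the cone `x_f + C`. -/
def coneCells (u : Euc d) (θ d₀ : ℝ) (f : M.ιF) : Finset M.ιT :=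
  Finset.univ.filter fun t => (M.cell t ∩ ((M.xF f + ·) '' ConeSet u θ d₀)).Nonempty

/-- The set `C_{f d₀}` of cells of `C_f` in the second half of the cone. -/
def coneCellsFar (u : Euc d) (θ d₀ : ℝ) (f : M.ιF) : Finset M.ιT :=
  (M.coneCells u θ d₀ f).filter fun t => d₀ / 2 - M.meshSize ≤ dist (M.xT t) (M.xF f)

end PolyMesh

/-- **Decomposition of the truncated seminorm** (eq. (2.5) / Statement 4): with
`w_h` the truncation of `γ(v_h)` to the boundary portion `Γ`,
`|w_h|_{1/2,h}² ≤ |γ(v_h)|_{1/2,h}² + 2 E₀`, where `E₀` is the cross term between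
faces of `Γ` and boundary faces outside `Γ`. -/
theorem truncated_seminorm_decomposition
    (d : ℕ) (hd : 2 ≤ d) (k : ℕ) (Ω : Set (Euc d)) (hΩ : IsPolytopalDomain Ω)
    (M : PolyMesh d Ω) (G : Finset M.ιF) (hG : G ⊆ M.bdryFaces)
    (v : Hybrid M k) :
    M.sHalfsq (M.truncate G v) ≤ M.sHalfsq (M.trace v) +
      2 * ∑ f ∈ G, ∑ f' ∈ M.bdryFaces \ G,
        M.faceMeas f * M.faceMeas f' * (M.faceMean f (v.vF f)) ^ 2 /
          dist (M.xF f) (M.xF f') ^ d := by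
  classical
  have hmeas : ∀ f : M.ιF, 0 ≤ M.faceMeas f := fun f => ENNReal.toReal_nonneg
  have hmean0 : ∀ f : M.ιF, M.faceMean f (fun _ => 0) = 0 := by
    intro f; simp [PolyMesh.faceMean]
  set e : M.ιF → M.ιF → ℝ := fun f f' =>
    M.faceMeas f * M.faceMeas f' * (M.faceMean f (v.vF f)) ^ 2 /
      dist (M.xF f) (M.xF f') ^ d with he
  have hBnn : ∀ (f f' : M.ιF) (a b : ℝ),
      0 ≤ M.faceMeas f * M.faceMeas f' * (a - b) ^ 2 / dist (M.xF f) (M.xF f') ^ d :=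
    fun f f' a b => div_nonneg (mul_nonneg (mul_nonneg (hmeas f) (hmeas f')) (sq_nonneg _))
      (pow_nonneg dist_nonneg _)
  have hw : ∀ f : {f // f ∈ M.bdryFaces},
      (M.truncate G v).w f = if f.1 ∈ G then v.vF f.1 else fun _ => 0 := fun f => rfl
  have hwt : ∀ f : {f // f ∈ M.bdryFaces}, (M.trace v).w f = v.vF f.1 := fun f => rfl
  have sumG : ∀ g : M.ιF → ℝ,
      ∑ f ∈ M.bdryFaces.attach, (if f.1 ∈ G then g f.1 else 0) = ∑ f ∈ G, g f := by
    intro g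
    rw [Finset.sum_attach M.bdryFaces fun f => if f ∈ G then g f else 0,
      Finset.sum_ite_mem, Finset.inter_eq_right.mpr hG]
  have sumGc : ∀ g : M.ιF → ℝ,
      ∑ f ∈ M.bdryFaces.attach, (if f.1 ∉ G then g f.1 else 0)
        = ∑ f ∈ M.bdryFaces \ G, g f := by
    intro g
    rw [Finset.sum_attach M.bdryFaces fun f => if f ∉ G then g f else 0,
      Finset.sdiff_eq_filter, Finset.sum_filter]
  rw [PolyMesh.sHalfsq, PolyMesh.sHalfsq]
  have h1 : ∑ f ∈ M.bdryFaces.attach, (Metric.diam (M.face f.1))⁻¹ *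
        ∫ x in M.face f.1, ((M.truncate G v).w f x
          - M.faceMean f.1 ((M.truncate G v).w f)) ^ 2 ∂μH[(d : ℝ) - 1]
      ≤ ∑ f ∈ M.bdryFaces.attach, (Metric.diam (M.face f.1))⁻¹ *
        ∫ x in M.face f.1, ((M.trace v).w f x
          - M.faceMean f.1 ((M.trace v).w f)) ^ 2 ∂μH[(d : ℝ) - 1] := by
    refine Finset.sum_le_sum fun f _ => ?_
    by_cases hf : f.1 ∈ G
    · simp [hw, hwt, hf]
    · have hz : (M.truncate G v).w f = fun _ => 0 := by simp [hw, hf]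
      rw [hz, hmean0]
      have hz0 : (Metric.diam (M.face f.1))⁻¹ *
          ∫ x in M.face f.1, ((fun _ : Euc d => (0:ℝ)) x - 0) ^ 2 ∂μH[(d : ℝ) - 1] = 0 := by
        simp
      rw [hz0]
      exact mul_nonneg (inv_nonneg.mpr Metric.diam_nonneg)
        (integral_nonneg fun x => sq_nonneg _)
  have key : ∀ f f' : {x // x ∈ M.bdryFaces},
      (if f.1 ≠ f'.1 then
          M.faceMeas f.1 * M.faceMeas f'.1 *
            (M.faceMean f.1 ((M.truncate G v).w f) -
              M.faceMean f'.1 ((M.truncate G v).w f')) ^ 2 /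
              dist (M.xF f.1) (M.xF f'.1) ^ d
        else 0) ≤
      (if f.1 ≠ f'.1 then
          M.faceMeas f.1 * M.faceMeas f'.1 *
            (M.faceMean f.1 ((M.trace v).w f) -
              M.faceMean f'.1 ((M.trace v).w f')) ^ 2 /
              dist (M.xF f.1) (M.xF f'.1) ^ d
        else 0) +
        ((if f.1 ∈ G ∧ f'.1 ∉ G then e f.1 f'.1 else 0) +
          (if f.1 ∉ G ∧ f'.1 ∈ G then e f'.1 f.1 else 0)) := by
    intro f f'
    have htr : 0 ≤ (if f.1 ≠ f'.1 then
          M.faceMeas f.1 * M.faceMeas f'.1 *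
            (M.faceMean f.1 ((M.trace v).w f) -
              M.faceMean f'.1 ((M.trace v).w f')) ^ 2 /
              dist (M.xF f.1) (M.xF f'.1) ^ d
        else 0) := by
      split_ifs
      · exact hBnn _ _ _ _
      · exact le_refl 0
    by_cases hne : f.1 = f'.1
    · have h1' : ¬ (f.1 ∈ G ∧ f'.1 ∉ G) := by rw [hne]; tauto
      have h2' : ¬ (f.1 ∉ G ∧ f'.1 ∈ G) := by rw [hne]; tauto
      simp [hne, h1', h2']
    · by_cases hf : f.1 ∈ G <;> by_cases hf' : f'.1 ∈ G
      · have h1' : ¬ (f.1 ∈ G ∧ f'.1 ∉ G) := by tauto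
        have h2' : ¬ (f.1 ∉ G ∧ f'.1 ∈ G) := by tauto
        simp [hw, hwt, hf, hf', h1', h2']
      · have hL : (if f.1 ≠ f'.1 then
            M.faceMeas f.1 * M.faceMeas f'.1 *
              (M.faceMean f.1 ((M.truncate G v).w f) -
                M.faceMean f'.1 ((M.truncate G v).w f')) ^ 2 /
                dist (M.xF f.1) (M.xF f'.1) ^ d
          else 0) = e f.1 f'.1 := by
          rw [if_pos hne]
          simp [hw, hf, hf', hmean0, he]
        rw [hL]
        have h2' : ¬ (f.1 ∉ G ∧ f'.1 ∈ G) := by tauto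
        rw [if_pos hne, if_pos (⟨hf, hf'⟩ : f.1 ∈ G ∧ f'.1 ∉ G), if_neg h2']
        linarith [hBnn f.1 f'.1 (M.faceMean f.1 ((M.trace v).w f))
          (M.faceMean f'.1 ((M.trace v).w f'))]
      · have hL : (if f.1 ≠ f'.1 then
            M.faceMeas f.1 * M.faceMeas f'.1 *
              (M.faceMean f.1 ((M.truncate G v).w f) -
                M.faceMean f'.1 ((M.truncate G v).w f')) ^ 2 /
                dist (M.xF f.1) (M.xF f'.1) ^ d
          else 0) = e f'.1 f.1 := by
          rw [if_pos hne]
          simp only [hw, if_neg hf, if_pos hf', hmean0, he]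
          rw [dist_comm]
          ring
        rw [hL]
        have h1' : ¬ (f.1 ∈ G ∧ f'.1 ∉ G) := by tauto
        rw [if_pos hne, if_neg h1', if_pos (⟨hf, hf'⟩ : f.1 ∉ G ∧ f'.1 ∈ G)]
        linarith [hBnn f.1 f'.1 (M.faceMean f.1 ((M.trace v).w f))
          (M.faceMean f'.1 ((M.trace v).w f'))]
      · have hL : (if f.1 ≠ f'.1 then
            M.faceMeas f.1 * M.faceMeas f'.1 *
              (M.faceMean f.1 ((M.truncate G v).w f) -
                M.faceMean f'.1 ((M.truncate G v).w f')) ^ 2 /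
                dist (M.xF f.1) (M.xF f'.1) ^ d
          else 0) = 0 := by
          rw [if_pos hne]
          simp [hw, hf, hf', hmean0]
        rw [hL]
        have h1' : ¬ (f.1 ∈ G ∧ f'.1 ∉ G) := by tauto
        have h2' : ¬ (f.1 ∉ G ∧ f'.1 ∈ G) := by tauto
        rw [if_neg h1', if_neg h2']
        linarith
  have hX : ∑ f ∈ M.bdryFaces.attach, ∑ f' ∈ M.bdryFaces.attach,
      (if f.1 ∈ G ∧ f'.1 ∉ G then e f.1 f'.1 else 0)
      = ∑ f ∈ G, ∑ f' ∈ M.bdryFaces \ G, e f f' := by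
    rw [← sumG fun f => ∑ f' ∈ M.bdryFaces \ G, e f f']
    refine Finset.sum_congr rfl fun f _ => ?_
    by_cases hf : f.1 ∈ G
    · rw [if_pos hf, ← sumGc fun f' => e f.1 f']
      refine Finset.sum_congr rfl fun f' _ => ?_
      by_cases hf' : f'.1 ∈ G
      · rw [if_neg (by tauto), if_neg (by tauto)]
      · rw [if_pos ⟨hf, hf'⟩, if_pos hf']
    · rw [if_neg hf]
      exact Finset.sum_eq_zero fun f' _ => if_neg (by tauto)
  have hY : ∑ f ∈ M.bdryFaces.attach, ∑ f' ∈ M.bdryFaces.attach,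
      (if f.1 ∉ G ∧ f'.1 ∈ G then e f'.1 f.1 else 0)
      = ∑ f ∈ G, ∑ f' ∈ M.bdryFaces \ G, e f f' := by
    have : ∑ f ∈ M.bdryFaces.attach, ∑ f' ∈ M.bdryFaces.attach,
        (if f.1 ∉ G ∧ f'.1 ∈ G then e f'.1 f.1 else 0)
        = ∑ f ∈ M.bdryFaces \ G, ∑ f' ∈ G, e f' f := by
      rw [← sumGc fun f => ∑ f' ∈ G, e f' f]
      refine Finset.sum_congr rfl fun f _ => ?_
      by_cases hf : f.1 ∈ G
      · rw [if_neg (by tauto)]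
        exact Finset.sum_eq_zero fun f' _ => if_neg (by tauto)
      · rw [if_pos hf, ← sumG fun f' => e f' f.1]
        refine Finset.sum_congr rfl fun f' _ => ?_
        by_cases hf' : f'.1 ∈ G
        · rw [if_pos ⟨hf, hf'⟩, if_pos hf']
        · rw [if_neg (by tauto), if_neg hf']
    rw [this, Finset.sum_comm]
  have h2 : ∑ f ∈ M.bdryFaces.attach, ∑ f' ∈ M.bdryFaces.attach,
      (if f.1 ≠ f'.1 then
          M.faceMeas f.1 * M.faceMeas f'.1 *
            (M.faceMean f.1 ((M.truncate G v).w f) -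
              M.faceMean f'.1 ((M.truncate G v).w f')) ^ 2 /
              dist (M.xF f.1) (M.xF f'.1) ^ d
        else 0)
      ≤ (∑ f ∈ M.bdryFaces.attach, ∑ f' ∈ M.bdryFaces.attach,
        (if f.1 ≠ f'.1 then
          M.faceMeas f.1 * M.faceMeas f'.1 *
            (M.faceMean f.1 ((M.trace v).w f) -
              M.faceMean f'.1 ((M.trace v).w f')) ^ 2 /
              dist (M.xF f.1) (M.xF f'.1) ^ d
        else 0))
      + 2 * ∑ f ∈ G, ∑ f' ∈ M.bdryFaces \ G, e f f' := by
    calc ∑ f ∈ M.bdryFaces.attach, ∑ f' ∈ M.bdryFaces.attach,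
        (if f.1 ≠ f'.1 then
          M.faceMeas f.1 * M.faceMeas f'.1 *
            (M.faceMean f.1 ((M.truncate G v).w f) -
              M.faceMean f'.1 ((M.truncate G v).w f')) ^ 2 /
              dist (M.xF f.1) (M.xF f'.1) ^ d
        else 0)
        ≤ ∑ f ∈ M.bdryFaces.attach, ∑ f' ∈ M.bdryFaces.attach,
          ((if f.1 ≠ f'.1 then
            M.faceMeas f.1 * M.faceMeas f'.1 *
              (M.faceMean f.1 ((M.trace v).w f) -
                M.faceMean f'.1 ((M.trace v).w f')) ^ 2 /
                dist (M.xF f.1) (M.xF f'.1) ^ d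
          else 0) +
          ((if f.1 ∈ G ∧ f'.1 ∉ G then e f.1 f'.1 else 0) +
            (if f.1 ∉ G ∧ f'.1 ∈ G then e f'.1 f.1 else 0))) :=
          Finset.sum_le_sum fun f _ => Finset.sum_le_sum fun f' _ => key f f'
      _ = (∑ f ∈ M.bdryFaces.attach, ∑ f' ∈ M.bdryFaces.attach,
          (if f.1 ≠ f'.1 then
            M.faceMeas f.1 * M.faceMeas f'.1 *
              (M.faceMean f.1 ((M.trace v).w f) -
                M.faceMean f'.1 ((M.trace v).w f')) ^ 2 /
                dist (M.xF f.1) (M.xF f'.1) ^ d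
          else 0))
          + ((∑ f ∈ M.bdryFaces.attach, ∑ f' ∈ M.bdryFaces.attach,
            (if f.1 ∈ G ∧ f'.1 ∉ G then e f.1 f'.1 else 0))
          + (∑ f ∈ M.bdryFaces.attach, ∑ f' ∈ M.bdryFaces.attach,
            (if f.1 ∉ G ∧ f'.1 ∈ G then e f'.1 f.1 else 0))) := by
          simp [Finset.sum_add_distrib]
      _ = _ := by rw [hX, hY]; ring
  calc _ ≤ (∑ f ∈ M.bdryFaces.attach, (Metric.diam (M.face f.1))⁻¹ *
          ∫ x in M.face f.1, ((M.trace v).w f x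
            - M.faceMean f.1 ((M.trace v).w f)) ^ 2 ∂μH[(d : ℝ) - 1])
        + ((∑ f ∈ M.bdryFaces.attach, ∑ f' ∈ M.bdryFaces.attach,
          (if f.1 ≠ f'.1 then
            M.faceMeas f.1 * M.faceMeas f'.1 *
              (M.faceMean f.1 ((M.trace v).w f) -
                M.faceMean f'.1 ((M.trace v).w f')) ^ 2 /
                dist (M.xF f.1) (M.xF f'.1) ^ d
          else 0))
        + 2 * ∑ f ∈ G, ∑ f' ∈ M.bdryFaces \ G, e f f') := add_le_add h1 h2
    _ = _ := by rw [he]; ring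
end
end

section
/- Cardinality bound for cone cells seen through an interior face: assume diam(Ω) = 1, let f ∈ G_r with attached cone x_f + C ⊂ Ω of height d_0 comparable to 1, and let g ∈ F_h^i be any interior face. Then the number of cells t ∈ C_{f d_0} such that g ∈ I_{ft} satisfies #{ t ∈ C_{f d_0} : g ∈ I_{ft} } ≤ C / (|x_f − x_g|^{d−1} h), where C depends only on the cone C, the mesh regularity parameters and the dimension d, not on h, f or g. -/
open MeasureTheory Metric Set
open scoped ENNReal NNReal Classical

noncomputable section

/-- Ball-packing counting lemma: if disjoint balls of radius `r` are each contained
in one of the balls `ball (z k) Rb`, `k ∈ K`, then there are at most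
`K.card * (Rb / r) ^ d` of them. -/
lemma count_balls {d : ℕ} (hd : 0 < d) {ι κ : Type*} (S : Finset ι) (K : Finset κ)
    (x : ι → Euc d) (z : κ → Euc d) (r Rb : ℝ) (hr : 0 < r) (hRb : 0 ≤ Rb)
    (hdisj : (S : Set ι).PairwiseDisjoint fun i => Metric.ball (x i) r)
    (hsub : ∀ i ∈ S, ∃ k ∈ K, Metric.ball (x i) r ⊆ Metric.ball (z k) Rb) :
    (S.card : ℝ) ≤ (K.card : ℝ) * (Rb / r) ^ d := by
  have : Nonempty (Fin d) := ⟨⟨0, hd⟩⟩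
  have hV0 : volume (ball (0 : Euc d) 1) ≠ 0 := (measure_ball_pos volume 0 one_pos).ne'
  have hVt : volume (ball (0 : Euc d) 1) ≠ ⊤ := measure_ball_lt_top.ne
  have hball : ∀ c : Euc d, ∀ s : ℝ, 0 ≤ s →
      volume (ball c s) = ENNReal.ofReal (s ^ d) * volume (ball (0 : Euc d) 1) := by
    intro c s hs
    rw [Measure.addHaar_ball volume c hs, finrank_euclideanSpace_fin]
  have h1 : volume (⋃ i ∈ S, ball (x i) r)
      = (S.card : ℝ≥0∞) * (ENNReal.ofReal (r ^ d) * volume (ball (0 : Euc d) 1)) := by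
    rw [measure_biUnion_finset hdisj (fun i _ => measurableSet_ball)]
    rw [Finset.sum_congr rfl (fun i _ => hball (x i) r hr.le), Finset.sum_const,
      nsmul_eq_mul]
  have h2 : volume (⋃ i ∈ S, ball (x i) r)
      ≤ (K.card : ℝ≥0∞) * (ENNReal.ofReal (Rb ^ d) * volume (ball (0 : Euc d) 1)) := by
    have hsub' : (⋃ i ∈ S, ball (x i) r) ⊆ ⋃ k ∈ K, ball (z k) Rb := by
      intro w hw
      simp only [mem_iUnion] at hw ⊢
      obtain ⟨i, hi, hwi⟩ := hw
      obtain ⟨k, hk, hks⟩ := hsub i hi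
      exact ⟨k, hk, hks hwi⟩
    calc volume (⋃ i ∈ S, ball (x i) r) ≤ volume (⋃ k ∈ K, ball (z k) Rb) :=
          measure_mono hsub'
      _ ≤ ∑ k ∈ K, volume (ball (z k) Rb) := measure_biUnion_finset_le K _
      _ = (K.card : ℝ≥0∞) * (ENNReal.ofReal (Rb ^ d) * volume (ball (0 : Euc d) 1)) := by
          rw [Finset.sum_congr rfl (fun k _ => hball (z k) Rb hRb), Finset.sum_const,
            nsmul_eq_mul]
  rw [h1] at h2
  rw [← mul_assoc, ← mul_assoc] at h2
  rw [ENNReal.mul_le_mul_iff_left hV0 hVt] at h2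
  have h3 : (S.card : ℝ) * r ^ d ≤ (K.card : ℝ) * Rb ^ d := by
    have := ENNReal.toReal_mono
      (ENNReal.mul_ne_top (by simp) ENNReal.ofReal_ne_top) h2
    simpa [ENNReal.toReal_mul, ENNReal.toReal_ofReal (pow_nonneg hr.le d),
      ENNReal.toReal_ofReal (pow_nonneg hRb d)] using this
  rw [div_pow, ← mul_div_assoc]
  exact (le_div_iff₀ (by positivity)).mpr h3

/-- The difference of the normalizations of two vectors is controlled by the
difference of the vectors. -/
lemma norm_normalize_sub' {E : Type*} [NormedAddCommGroup E] [NormedSpace ℝ E]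
    (a b : E) (ha : a ≠ 0) (hb : b ≠ 0) :
    ‖‖a‖⁻¹ • a - ‖b‖⁻¹ • b‖ ≤ 2 * ‖a - b‖ / ‖a‖ := by
  have ha' : (0:ℝ) < ‖a‖ := norm_pos_iff.mpr ha
  have hb' : (0:ℝ) < ‖b‖ := norm_pos_iff.mpr hb
  have key : ‖a‖⁻¹ • a - ‖b‖⁻¹ • b = ‖a‖⁻¹ • (a - b) + (‖a‖⁻¹ - ‖b‖⁻¹) • b := by
    module
  rw [key]
  have h1 : ‖‖a‖⁻¹ • (a - b)‖ = ‖a - b‖ / ‖a‖ := by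
    rw [norm_smul, norm_inv, norm_norm]; ring
  have h2 : ‖(‖a‖⁻¹ - ‖b‖⁻¹) • b‖ ≤ ‖a - b‖ / ‖a‖ := by
    rw [norm_smul, Real.norm_eq_abs]
    have : |‖a‖⁻¹ - ‖b‖⁻¹| = |‖b‖ - ‖a‖| / (‖a‖ * ‖b‖) := by
      rw [show ‖a‖⁻¹ - ‖b‖⁻¹ = (‖b‖ - ‖a‖) / (‖a‖ * ‖b‖) by field_simp,
        abs_div, abs_of_pos (mul_pos ha' hb')]
    rw [this]
    have h3 : |‖b‖ - ‖a‖| ≤ ‖a - b‖ := by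
      rw [abs_sub_comm]; exact (abs_norm_sub_norm_le a b)
    calc |‖b‖ - ‖a‖| / (‖a‖ * ‖b‖) * ‖b‖ = |‖b‖ - ‖a‖| / ‖a‖ := by field_simp
      _ ≤ ‖a - b‖ / ‖a‖ := by gcongr
  calc ‖‖a‖⁻¹ • (a - b) + (‖a‖⁻¹ - ‖b‖⁻¹) • b‖
      ≤ ‖‖a‖⁻¹ • (a - b)‖ + ‖(‖a‖⁻¹ - ‖b‖⁻¹) • b‖ := norm_add_le _ _
    _ ≤ ‖a - b‖ / ‖a‖ + ‖a - b‖ / ‖a‖ := by rw [h1]; gcongr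
    _ = 2 * ‖a - b‖ / ‖a‖ := by ring

/-- If the point `c • v` on the ray spanned by `v` is `h`-close to `b`, with
`‖b‖ = R ≥ 2h` and `‖v‖ ≤ 1`, then `v` is `(4h/R)`-close to the point of the ray
spanned by `b` at distance `‖v‖` from the origin. -/
lemma ray_close {E : Type*} [NormedAddCommGroup E] [NormedSpace ℝ E]
    (v b : E) (c : ℝ) (hc : 0 < c) (hv : v ≠ 0) (h R : ℝ) (hh : 0 < h)
    (hR2 : 2 * h ≤ R) (hbn : ‖b‖ = R) (hab : ‖c • v - b‖ ≤ h) (hv1 : ‖v‖ ≤ 1) :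
    ‖v - ‖v‖ • (‖b‖⁻¹ • b)‖ ≤ 4 * h / R := by
  have hR0 : 0 < R := lt_of_lt_of_le (by linarith) hR2
  have hb0 : b ≠ 0 := by intro hz; rw [hz, norm_zero] at hbn; linarith
  have hvn : (0:ℝ) < ‖v‖ := norm_pos_iff.mpr hv
  have ha0 : c • v ≠ 0 := smul_ne_zero hc.ne' hv
  have ha_lb : R / 2 ≤ ‖c • v‖ := by
    have h1 := norm_sub_norm_le b (c • v)
    have h2 := norm_sub_rev b (c • v)
    linarith
  have hva : ‖c • v‖⁻¹ • (c • v) = ‖v‖⁻¹ • v := by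
    rw [norm_smul, Real.norm_eq_abs, abs_of_pos hc, smul_smul]
    congr 1
    field_simp
  have key : v - ‖v‖ • (‖b‖⁻¹ • b) = ‖v‖ • (‖c • v‖⁻¹ • (c • v) - ‖b‖⁻¹ • b) := by
    rw [hva, smul_sub, smul_smul, smul_smul, mul_inv_cancel₀ hvn.ne', one_smul]
  rw [key, norm_smul, Real.norm_eq_abs, abs_of_pos hvn]
  have hd1 := norm_normalize_sub' (c • v) b ha0 hb0
  have hd2 : 2 * ‖c • v - b‖ / ‖c • v‖ ≤ 2 * h / (R / 2) := by
    gcongr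
  calc ‖v‖ * ‖‖c • v‖⁻¹ • (c • v) - ‖b‖⁻¹ • b‖ ≤ 1 * (2 * h / (R / 2)) :=
        mul_le_mul hv1 (le_trans hd1 hd2) (norm_nonneg _) one_pos.le
    _ = 4 * h / R := by field_simp; ring

set_option maxHeartbeats 1000000 in
/-- **Cardinality bound for cone cells seen through an interior face**
(Lemma 2.7-(ii) / Statement 10): if `diam Ω = 1`, `f ∈ G_r` with attached cone
`x_f + C ⊆ Ω` of height `d₀ ≃ 1`, and `g` is an interior face, then
`#{t ∈ C_{f d₀} : g ∈ I_{ft}} ≤ C / (|x_f - x_g|^{d-1} h)`, with `C` depending only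
on the cone `C`, the mesh regularity parameters and the dimension `d`. -/
theorem cone_cells_through_face_card_bound
    (d : ℕ) (hd : 2 ≤ d) (θ c₀ ϖ ρ : ℝ) (hc₀ : 0 < c₀) (hϖ : 0 < ϖ) (hρ : 0 < ρ) :
    ∃ C : ℝ, 0 < C ∧
      ∀ (Ω : Set (Euc d)), IsPolytopalDomain Ω → Metric.diam Ω = 1 →
        ∀ M : PolyMesh d Ω, M.IsRegular ϖ ρ →
          ∀ G : Finset M.ιF, G ⊆ M.bdryFaces →
            ∀ (r : ℕ), ∀ f ∈ M.layer G r,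
              ∀ (u : Euc d) (d₀ : ℝ), ‖u‖ = 1 → c₀ ≤ d₀ → d₀ ≤ 1 →
                ((M.xF f + ·) '' ConeSet u θ d₀) ⊆ Ω →
                ∀ g ∈ M.intFaces,
                  (((M.coneCellsFar u θ d₀ f).filter fun t => g ∈ M.Ift f t).card : ℝ) ≤
                    C / (dist (M.xF f) (M.xF g) ^ (d - 1) * M.meshSize) := by
  have hd0 : 0 < d := by omega
  set A : ℝ := (5 + ϖ / ρ) * (ρ / ϖ) with hA_def
  set B : ℝ := (1 + ϖ / ρ) * (ρ / ϖ) with hB_def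
  have hA : 0 < A := by positivity
  have hB : 0 < B := by positivity
  refine ⟨2 ^ d * (A ^ d + B ^ d), by positivity, ?_⟩
  intro Ω hΩpoly hΩdiam M hreg G hG r f hf u d₀ hu hd₀1 hd₀2 hcone g hg
  obtain ⟨hΩopen, hΩbdd, -, -⟩ := hΩpoly
  have hclos_bdd : Bornology.IsBounded (closure Ω) := hΩbdd.closure
  have hdiam_clos : Metric.diam (closure Ω) = 1 := by rw [Metric.diam_closure, hΩdiam]
  have hcell_sub : ∀ t, closure (M.cell t) ⊆ closure Ω := by
    intro t; rw [← M.cells_cover]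
    exact Set.subset_iUnion (fun t => closure (M.cell t)) t
  have hcell_sub' : ∀ t, M.cell t ⊆ closure Ω := fun t => subset_closure.trans (hcell_sub t)
  have hm1 : M.meshSize ≤ 1 := by
    apply Finset.sup'_le
    intro t _
    calc Metric.diam (M.cell t) ≤ Metric.diam (closure Ω) :=
          Metric.diam_mono (hcell_sub' t) hclos_bdd
      _ = 1 := hdiam_clos
  have hm0 : 0 < M.meshSize := by
    have : Nonempty M.ιT := M.neT
    obtain ⟨t₀⟩ := this
    obtain ⟨x, hx⟩ := M.cell_nonempty t₀
    obtain ⟨ε, hε, hball⟩ := Metric.isOpen_iff.mp (M.cell_open t₀) x hx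
    set w : Euc d := EuclideanSpace.single (⟨0, hd0⟩ : Fin d) (ε / 2) with hw_def
    have hwn : ‖w‖ = ε / 2 := by
      rw [hw_def, EuclideanSpace.norm_single]; exact abs_of_pos (by linarith)
    have hxw : x + w ∈ M.cell t₀ := by
      apply hball
      rw [mem_ball, dist_eq_norm, add_sub_cancel_left, hwn]
      linarith
    have hdist : ε / 2 ≤ Metric.diam (M.cell t₀) := by
      have := Metric.dist_le_diam_of_mem (hclos_bdd.subset (hcell_sub' t₀)) hxw hx
      rwa [dist_eq_norm, add_sub_cancel_left, hwn] at this
    calc (0:ℝ) < ε / 2 := by linarith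
      _ ≤ Metric.diam (M.cell t₀) := hdist
      _ ≤ M.meshSize := by
          exact Finset.le_sup' (fun t => Metric.diam (M.cell t)) (Finset.mem_univ t₀)
  set R := dist (M.xF f) (M.xF g) with hR_def
  have hfG : f ∈ G := (Finset.mem_filter.mp hf).1
  have hfb : M.face f ⊆ frontier Ω := by
    have := hG hfG
    rw [PolyMesh.bdryFaces, Finset.mem_filter] at this
    exact this.2
  have hgint : M.face g ⊆ Ω := by
    rw [PolyMesh.intFaces, Finset.mem_filter] at hg
    exact hg.2
  have hxf_front : M.xF f ∈ frontier Ω := hfb (M.xF_mem f)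
  have hxf_clos : M.xF f ∈ closure Ω := frontier_subset_closure hxf_front
  have hxf_notin : M.xF f ∉ Ω := by
    rw [hΩopen.frontier_eq] at hxf_front; exact hxf_front.2
  have hxg_mem : M.xF g ∈ Ω := hgint (M.xF_mem g)
  have hR0 : 0 < R := by
    rw [hR_def, dist_pos]
    intro he
    exact hxf_notin (he ▸ hxg_mem)
  have hR1 : R ≤ 1 := by
    have := Metric.dist_le_diam_of_mem hclos_bdd hxf_clos (subset_closure hxg_mem)
    rwa [hdiam_clos] at this
  have hfaceg_bdd : Bornology.IsBounded (M.face g) :=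
    hclos_bdd.subset (hgint.trans subset_closure)
  have hdiam_faceg : Metric.diam (M.face g) ≤ M.meshSize := by
    obtain ⟨t', ht'⟩ := M.face_has_cell g
    calc Metric.diam (M.face g)
        ≤ Metric.diam (closure (M.cell t')) :=
          Metric.diam_mono ((M.face_subset_frontier t' g ht').trans frontier_subset_closure)
            (hclos_bdd.subset (hcell_sub t'))
      _ = Metric.diam (M.cell t') := Metric.diam_closure _
      _ ≤ M.meshSize := by
          exact Finset.le_sup' (fun t => Metric.diam (M.cell t)) (Finset.mem_univ t')
  set r0 : ℝ := ϖ * M.meshSize / ρ with hr0_def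
  have hr0 : 0 < r0 := by positivity
  have hball_cell : ∀ t, Metric.ball (M.xT t) r0 ⊆ M.cell t := by
    intro t
    refine (Metric.ball_subset_ball ?_).trans (hreg.1 t)
    have h1 := hreg.2.2 t
    rw [hr0_def, div_le_iff₀ hρ]
    nlinarith
  set S := (M.coneCellsFar u θ d₀ f).filter (fun t => g ∈ M.Ift f t) with hS_def
  have hdisj : (S : Set M.ιT).PairwiseDisjoint fun t => Metric.ball (M.xT t) r0 := by
    intro i _ j _ hij
    exact (M.cell_disjoint i j hij).mono (hball_cell i) (hball_cell j)
  have hseg_data : ∀ t ∈ S, ∃ y, y ∈ M.face g ∧ y ∈ segment ℝ (M.xF f) (M.xT t) := by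
    intro t ht
    have ht2 : g ∈ M.Ift f t := (Finset.mem_filter.mp ht).2
    rw [PolyMesh.Ift, Finset.mem_filter] at ht2
    obtain ⟨y, hy1, hy2⟩ := ht2.2
    exact ⟨y, hy1, hy2⟩
  have hxt_dist : ∀ t : M.ιT, dist (M.xT t) (M.xF f) ≤ 1 := by
    intro t
    have := Metric.dist_le_diam_of_mem hclos_bdd (hcell_sub' t (M.xT_mem t)) hxf_clos
    rwa [hdiam_clos] at this
  have hpowh : M.meshSize ^ (d - 1) * M.meshSize = M.meshSize ^ d := by
    rw [← pow_succ]; congr 1; omega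
  have hpowR : R ^ (d - 1) * R = R ^ d := by rw [← pow_succ]; congr 1; omega
  rcases le_or_gt R (2 * M.meshSize) with hcase | hcase
  · -- crude packing bound when `R ≤ 2h`
    have hsub : ∀ t ∈ S, ∃ k ∈ (Finset.univ : Finset Unit),
        Metric.ball (M.xT t) r0 ⊆ Metric.ball ((fun _ => M.xF f) k) (1 + ϖ/ρ) := by
      intro t _
      refine ⟨(), Finset.mem_univ _, Metric.ball_subset_ball' ?_⟩
      have h1 : r0 ≤ ϖ/ρ := by
        rw [hr0_def]
        calc ϖ * M.meshSize / ρ ≤ ϖ * 1 / ρ := by gcongr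
          _ = ϖ/ρ := by ring
      have h2 := hxt_dist t
      linarith
    have hcount := count_balls hd0 S Finset.univ M.xT (fun _ => M.xF f) r0 (1 + ϖ/ρ)
      hr0 (by positivity) hdisj hsub
    rw [Finset.card_univ] at hcount
    simp only [Fintype.card_unit, Nat.cast_one, one_mul] at hcount
    have hq : (1 + ϖ/ρ) / r0 = B / M.meshSize := by
      rw [hr0_def, hB_def]; field_simp
    rw [hq] at hcount
    rw [le_div_iff₀ (by positivity)]
    have hRpow : R ^ (d-1) ≤ 2^(d-1) * M.meshSize^(d-1) := by
      calc R ^ (d-1) ≤ (2*M.meshSize)^(d-1) := pow_le_pow_left₀ hR0.le hcase _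
        _ = 2^(d-1)*M.meshSize^(d-1) := mul_pow _ _ _
    calc (S.card : ℝ) * (R^(d-1) * M.meshSize)
        ≤ (B/M.meshSize)^d * (2^(d-1)*M.meshSize^(d-1) * M.meshSize) := by
          apply mul_le_mul hcount ?_ (by positivity) (by positivity)
          exact mul_le_mul_of_nonneg_right hRpow hm0.le
      _ = 2^(d-1) * B^d := by
          rw [mul_assoc, hpowh, div_pow]
          field_simp
      _ ≤ 2^d*(A^d+B^d) := by
          have h2d : (2:ℝ)^(d-1) ≤ 2^d := pow_le_pow_right₀ one_le_two (by omega)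
          nlinarith [pow_nonneg hA.le d, pow_nonneg hB.le d,
            mul_le_mul_of_nonneg_right h2d (pow_nonneg hB.le d),
            mul_nonneg (pow_nonneg (by norm_num : (0:ℝ) ≤ 2) d) (pow_nonneg hA.le d)]
  · -- main case `2h < R`
    set N := ⌈R / M.meshSize⌉₊ with hN_def
    have hN1 : 1 ≤ N := Nat.one_le_ceil_iff.mpr (by positivity)
    have hNge : R / M.meshSize ≤ (N:ℝ) := Nat.le_ceil _
    have hNpos : (0:ℝ) < (N:ℝ) := by exact_mod_cast hN1
    have hNlt : (N:ℝ) < R / M.meshSize + 1 := Nat.ceil_lt_add_one (by positivity)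
    clear_value N
    set b := M.xF g - M.xF f with hb_def
    have hbn : ‖b‖ = R := by rw [hb_def, hR_def, dist_eq_norm']
    have hb0 : b ≠ 0 := by intro hz; rw [hz, norm_zero] at hbn; linarith
    set e₀ := ‖b‖⁻¹ • b with he_def
    have he_norm : ‖e₀‖ = 1 := by
      rw [he_def, norm_smul, norm_inv, norm_norm,
        inv_mul_cancel₀ (norm_ne_zero_iff.mpr hb0)]
    set z : Fin (N+1) → Euc d := fun k => M.xF f + ((k.1 : ℝ)/(N:ℝ)) • e₀ with hz_def
    have hsub : ∀ t ∈ S, ∃ k ∈ (Finset.univ : Finset (Fin (N+1))),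
        Metric.ball (M.xT t) r0 ⊆ Metric.ball (z k) ((5 + ϖ/ρ) * M.meshSize / R) := by
      intro t ht
      obtain ⟨y, hy1, hy2⟩ := hseg_data t ht
      have hyg : dist y (M.xF g) ≤ M.meshSize :=
        le_trans (Metric.dist_le_diam_of_mem hfaceg_bdd hy1 (M.xF_mem g)) hdiam_faceg
      have hy_ne : y ≠ M.xF f := by intro he; exact hxf_notin (he ▸ hgint hy1)
      rw [segment_eq_image'] at hy2
      obtain ⟨c, hc01, hyeq⟩ := hy2
      simp only at hyeq
      have hc0 : 0 < c := by
        rcases hc01.1.lt_or_eq with h' | h'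
        · exact h'
        · exfalso; apply hy_ne; rw [← hyeq, ← h', zero_smul, add_zero]
      set v := M.xT t - M.xF f with hv_def
      have hv0 : v ≠ 0 := by
        intro hz
        apply hy_ne
        rw [← hyeq, hz, smul_zero, add_zero]
      have hab : ‖c • v - b‖ ≤ M.meshSize := by
        have hcv : c • v = y - M.xF f := by rw [← hyeq, add_sub_cancel_left]
        rw [hcv, hb_def, show (y - M.xF f) - (M.xF g - M.xF f) = y - M.xF g from by abel,
          ← dist_eq_norm]
        exact hyg
      have hv1 : ‖v‖ ≤ 1 := by rw [hv_def, ← dist_eq_norm]; exact hxt_dist t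
      have hray := ray_close v b c hc0 hv0 M.meshSize R hm0 (by linarith) hbn hab hv1
      set s := ‖v‖ with hs_def
      have hs0 : (0:ℝ) ≤ s := norm_nonneg v
      set k : ℕ := ⌊s * N⌋₊ with hk_def
      have hkN : k ≤ N := by
        calc k ≤ ⌊(N:ℝ)⌋₊ := Nat.floor_le_floor (by nlinarith)
          _ = N := Nat.floor_natCast N
      have hk_le : (k:ℝ) ≤ s * N := Nat.floor_le (by positivity)
      have hk_gt : s * N < (k:ℝ) + 1 := Nat.lt_floor_add_one _
      refine ⟨⟨k, by omega⟩, Finset.mem_univ _, Metric.ball_subset_ball' ?_⟩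
      have hd1 : dist (M.xT t) (M.xF f + s • e₀) ≤ 4 * M.meshSize / R := by
        rw [dist_eq_norm, sub_add_eq_sub_sub]
        exact hray
      have hd2 : dist (M.xF f + s • e₀) (z ⟨k, by omega⟩) ≤ M.meshSize / R := by
        show dist (M.xF f + s • e₀) (M.xF f + ((k:ℝ)/(N:ℝ)) • e₀) ≤ M.meshSize / R
        rw [dist_eq_norm, add_sub_add_left_eq_sub, ← sub_smul, norm_smul, he_norm,
          mul_one, Real.norm_eq_abs]
        have e1 : (k:ℝ)/N ≤ s := (div_le_iff₀ hNpos).mpr hk_le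
        have e2 : s < ((k:ℝ)+1)/N := (lt_div_iff₀ hNpos).mpr hk_gt
        have e3 : ((k:ℝ)+1)/N = (k:ℝ)/N + 1/N := by ring
        have h1 : |s - (k:ℝ)/N| ≤ 1/(N:ℝ) := by
          rw [abs_le]
          constructor
          · have : (0:ℝ) < 1/(N:ℝ) := by positivity
            linarith
          · linarith
        have h2 : 1/(N:ℝ) ≤ M.meshSize / R := by
          rw [div_le_div_iff₀ hNpos hR0]
          have := (div_le_iff₀ hm0).mp hNge
          linarith
        linarith
      have hd3 : dist (M.xT t) (z ⟨k, by omega⟩) ≤ 5 * M.meshSize / R := by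
        have := dist_triangle (M.xT t) (M.xF f + s • e₀) (z ⟨k, by omega⟩)
        have heq : 4 * M.meshSize / R + M.meshSize / R = 5 * M.meshSize / R := by ring
        linarith
      have hr0R : r0 ≤ (ϖ/ρ) * M.meshSize / R := by
        rw [hr0_def]
        have heq : ϖ * M.meshSize / ρ = (ϖ/ρ) * M.meshSize / 1 := by ring
        rw [heq]
        gcongr
      have heq2 : (ϖ/ρ)*M.meshSize/R + 5*M.meshSize/R = (5+ϖ/ρ)*M.meshSize/R := by ring
      linarith
    have hcount := count_balls hd0 S Finset.univ M.xT z r0 ((5 + ϖ/ρ) * M.meshSize / R)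
      hr0 (by positivity) hdisj hsub
    rw [Finset.card_univ, Fintype.card_fin] at hcount
    push_cast at hcount
    have hq : ((5 + ϖ/ρ) * M.meshSize / R) / r0 = A / R := by
      rw [hr0_def, hA_def]; field_simp
    rw [hq] at hcount
    have hN2 : ((N:ℝ) + 1) ≤ 2 * R / M.meshSize := by
      have h2' : (2:ℝ) ≤ R / M.meshSize := by
        rw [le_div_iff₀ hm0]; linarith
      have heq : 2 * R / M.meshSize = 2 * (R / M.meshSize) := by ring
      linarith [hNlt]
    calc ((S.card : ℕ):ℝ) ≤ ((N:ℝ)+1) * (A/R)^d := hcount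
      _ ≤ (2*R/M.meshSize) * (A/R)^d := mul_le_mul_of_nonneg_right hN2 (by positivity)
      _ = 2*A^d/(R^(d-1)*M.meshSize) := by
          rw [div_pow, ← hpowR]
          field_simp
      _ ≤ 2^d*(A^d+B^d)/(R^(d-1)*M.meshSize) := by
          have h2d : (2:ℝ) ≤ 2^d := by
            calc (2:ℝ) = 2^1 := (pow_one 2).symm
              _ ≤ 2^d := pow_le_pow_right₀ one_le_two (by omega)
          have hnum : 2*A^d ≤ 2^d*(A^d+B^d) := by
            nlinarith [pow_nonneg hA.le d, pow_nonneg hB.le d,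
              mul_le_mul_of_nonneg_right h2d (pow_nonneg hA.le d),
              mul_nonneg (pow_nonneg (by norm_num : (0:ℝ) ≤ 2) d) (pow_nonneg hB.le d)]
          exact div_le_div_of_nonneg_right hnum (by positivity)
end
end
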